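/- The Lie algebra T*su(2) (the T*-extension of su(2)) admits no k-symplectic structure for any k ≥ 1. -/

import Mathlib

section TStarExtension

variable {L : Type*} [LieRing L] [LieAlgebra ℝ L]

/-- The Lie ring structure of the `T*`-extension `T*g = g ⊕ g*` of a real Lie algebra `g`:
`[u + α, v + β] = [u,v] + ad*_u β − ad*_v α`, where `(ad*_u α)(v) = −α([u,v])`.
(Here `⁅u, β⁆ = ad*_u β` is the coadjoint action of Mathlib's
`Module.Dual.instLieRingModule`, for which `⁅u, β⁆ v = −β ⁅u, v⁆`.) -/
instance tstarLieRing : LieRing (L × Module.Dual ℝ L) where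
  bracket x y := (⁅x.1, y.1⁆, ⁅x.1, y.2⁆ - ⁅y.1, x.2⁆)
  add_lie x y z := by
    refine Prod.ext ?_ ?_
    · show ⁅(x + y).1, z.1⁆ = (⁅x.1, z.1⁆ + ⁅y.1, z.1⁆ : L)
      simp [add_lie]
    · show ⁅(x + y).1, z.2⁆ - ⁅z.1, (x + y).2⁆ =
        (⁅x.1, z.2⁆ - ⁅z.1, x.2⁆) + (⁅y.1, z.2⁆ - ⁅z.1, y.2⁆)
      simp only [Prod.fst_add, Prod.snd_add, add_lie, lie_add]
      abel
  lie_add x y z := by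
    refine Prod.ext ?_ ?_
    · show ⁅x.1, (y + z).1⁆ = (⁅x.1, y.1⁆ + ⁅x.1, z.1⁆ : L)
      simp [lie_add]
    · show ⁅x.1, (y + z).2⁆ - ⁅(y + z).1, x.2⁆ =
        (⁅x.1, y.2⁆ - ⁅y.1, x.2⁆) + (⁅x.1, z.2⁆ - ⁅z.1, x.2⁆)
      simp only [Prod.fst_add, Prod.snd_add, add_lie, lie_add]
      abel
  lie_self x := by
    refine Prod.ext ?_ ?_
    · show ⁅x.1, x.1⁆ = (0 : L)
      simp
    · show ⁅x.1, x.2⁆ - ⁅x.1, x.2⁆ = (0 : Module.Dual ℝ L)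
      simp
  leibniz_lie x y z := by
    refine Prod.ext ?_ ?_
    · show ⁅x.1, ⁅y.1, z.1⁆⁆ = (⁅⁅x.1, y.1⁆, z.1⁆ + ⁅y.1, ⁅x.1, z.1⁆⁆ : L)
      exact leibniz_lie _ _ _
    · show ⁅x.1, ⁅y.1, z.2⁆ - ⁅z.1, y.2⁆⁆ - ⁅⁅y.1, z.1⁆, x.2⁆ =
        (⁅⁅x.1, y.1⁆, z.2⁆ - ⁅z.1, ⁅x.1, y.2⁆ - ⁅y.1, x.2⁆⁆) +
        (⁅y.1, ⁅x.1, z.2⁆ - ⁅z.1, x.2⁆⁆ - ⁅⁅x.1, z.1⁆, y.2⁆)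
      simp only [lie_lie, lie_sub]
      abel

/-- The `T*`-extension is a Lie algebra over `ℝ`. -/
noncomputable instance tstarLieAlgebra : LieAlgebra ℝ (L × Module.Dual ℝ L) where
  lie_smul t x y := by
    refine Prod.ext ?_ ?_
    · show ⁅x.1, (t • y).1⁆ = t • ⁅x.1, y.1⁆
      rw [Prod.smul_fst, lie_smul]
    · show ⁅x.1, (t • y).2⁆ - ⁅(t • y).1, x.2⁆ = t • (⁅x.1, y.2⁆ - ⁅y.1, x.2⁆)
      ext m
      simp only [Prod.smul_fst, Prod.smul_snd, LinearMap.sub_apply, LinearMap.smul_apply,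
        Module.Dual.lie_apply, smul_lie, map_smul, smul_eq_mul, smul_sub]
      ring

/-- The canonical invariant bilinear form of the `T*`-extension:
`⟨u + α, v + β⟩ = α(v) + β(u)`. -/
def tstarForm (x y : L × Module.Dual ℝ L) : ℝ := x.2 y.1 + y.2 x.1

end TStarExtension

/-- A 2-cocycle on a real Lie algebra: an alternating bilinear form `θ` satisfying
`θ([u,v],w) + θ([v,w],u) + θ([w,u],v) = 0`. -/
def IsTwoCocycle {M : Type*} [LieRing M] [LieAlgebra ℝ M]
    (θ : M →ₗ[ℝ] M →ₗ[ℝ] ℝ) : Prop :=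
  (∀ u : M, θ u u = 0) ∧
  ∀ u v w : M, θ ⁅u, v⁆ w + θ ⁅v, w⁆ u + θ ⁅w, u⁆ v = 0

/-- A `k`-symplectic structure on a real Lie algebra `M` of dimension `n * (k+1)`. -/
def IsKSymplectic {M : Type*} [LieRing M] [LieAlgebra ℝ M] (n k : ℕ)
    (H : LieSubalgebra ℝ M) (θ : Fin k → (M →ₗ[ℝ] M →ₗ[ℝ] ℝ)) : Prop :=
  Module.finrank ℝ M = n * (k + 1) ∧
  Module.finrank ℝ H = n * k ∧
  (∀ i, IsTwoCocycle (θ i)) ∧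
  (∀ u : M, (∀ i, ∀ v : M, θ i u v = 0) → u = 0) ∧
  (∀ i, ∀ u ∈ H, ∀ v ∈ H, θ i u v = 0)

/-!
Write `κ = b.toDual : su(2) → su(2)*`. In the coordinates of `b` the bracket is the cross product
and `κ` is the dot product, so `κ` is an `su(2)`-equivariant isomorphism. For a 2-cocycle `θ` on
`T*su(2)`, the restriction of `θ` to `su(2)*` is an invariant alternating form, hence zero because
`su(2)` is perfect, and the cocycle identity makes the mixed part `(u, v) ↦ θ(u, κ v)`
antisymmetric. So whenever `θ(u, α) = 0` for all `α ∈ su(2)*`, `κ u` lies in the radical of `θ`.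

For `k = 1` such a `u ≠ 0` exists because an antisymmetric form on the odd-dimensional `su(2)` is
degenerate. Otherwise `n (k + 1) = 6` forces `dim H ∈ {4, 5}`. As `su(2)` has no 2-dimensional
subalgebra and `su(2)*` is an irreducible `su(2)`-module, the projection of `H` to `su(2)` is a line
and `H ⊇ su(2)*`; isotropy of `H` then gives `θᵢ(u, α) = 0` for a nonzero `u` in that line.
-/

open Module Matrix

theorem LinearMap.BilinForm.not_separatingLeft_of_antisymm {K V : Type*} [Field K] [CharZero K]
    [AddCommGroup V] [Module K V] [FiniteDimensional K V] (hodd : Odd (finrank K V))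
    (B : LinearMap.BilinForm K V) (hB : ∀ x y, B y x = -B x y) : ¬ B.SeparatingLeft := by
  let e := Module.finBasis K V
  refine mt Nondegenerate.ofSeparatingLeft ?_
  rw [nondegenerate_iff_det_ne_zero e, not_not]
  have hA : (BilinForm.toMatrix e B)ᵀ = -BilinForm.toMatrix e B := by
    ext i j
    rw [transpose_apply, Matrix.neg_apply, BilinForm.toMatrix_apply, BilinForm.toMatrix_apply, hB]
  refine self_eq_neg.mp ?_
  calc (BilinForm.toMatrix e B).det = (BilinForm.toMatrix e B)ᵀ.det := (det_transpose _).symm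
    _ = -(BilinForm.toMatrix e B).det := by
      rw [hA, det_neg, Fintype.card_fin, hodd.neg_one_pow, neg_one_mul]

theorem Submodule.finrank_map_fst_add_finrank_comap_inr {K V W : Type*} [Field K]
    [AddCommGroup V] [Module K V] [AddCommGroup W] [Module K W] (H : Submodule K (V × W))
    [FiniteDimensional K H] :
    finrank K (H.map (LinearMap.fst K V W)) + finrank K (H.comap (LinearMap.inr K V W))
      = finrank K H := by
  let f := LinearMap.fst K V W ∘ₗ H.subtype
  have hker : f.ker.map H.subtype = (H.comap (LinearMap.inr K V W)).map (LinearMap.inr K V W) := by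
    rw [LinearMap.ker_comp, Submodule.map_comap_subtype, LinearMap.ker_fst, Submodule.map_comap_eq,
      inf_comm]
  have hfinrank := congrArg (fun p : Submodule K (V × W) => finrank K p) hker
  rw [Submodule.finrank_map_subtype_eq,
    (Submodule.equivMapOfInjective _ LinearMap.inr_injective _).finrank_eq.symm] at hfinrank
  rw [← hfinrank, ← f.finrank_range_add_finrank_ker, LinearMap.range_comp, Submodule.range_subtype]

theorem LinearMap.apply_lie_eq_zero_of_invariant {K L : Type*} [Field K] [CharZero K] [LieRing L]
    [LieAlgebra K L] (ω : L →ₗ[K] L →ₗ[K] K) (hskew : ∀ x y, ω y x = -ω x y)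
    (hinv : ∀ x y z : L, ω ⁅x, y⁆ z = -ω y ⁅x, z⁆) (x y z : L) : ω ⁅x, y⁆ z = 0 := by
  -- `ω ⁅x, y⁆ z` is antisymmetric in `x, y` and symmetric in `y, z`, hence zero.
  have hsymm : ∀ x y z : L, ω ⁅x, y⁆ z = ω ⁅x, z⁆ y := fun x y z => by rw [hinv, hskew, neg_neg]
  have hanti : ∀ x y z : L, ω ⁅x, y⁆ z = -ω ⁅y, x⁆ z := fun x y z => by
    rw [← lie_skew, map_neg, LinearMap.neg_apply]
  refine self_eq_neg.mp ?_
  calc ω ⁅x, y⁆ z = ω ⁅y, z⁆ x := by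
        rw [hsymm x y z, hanti x z y, hsymm z x y, hanti z y x, neg_neg]
    _ = -ω ⁅x, y⁆ z := by rw [hsymm y z x, hanti y x z]

namespace Module.Basis

variable {M ι : Type*} [Fintype ι] [DecidableEq ι]

lemma toDual_apply_eq_dotProduct {R : Type*} [CommSemiring R] [AddCommMonoid M] [Module R M]
    (b : Basis ι R M) (x y : M) : b.toDual x y = b.equivFun x ⬝ᵥ b.equivFun y := by
  conv_lhs => rw [← b.sum_equivFun y, map_sum]
  simp only [map_smul, b.toDual_eq_equivFun, smul_eq_mul, dotProduct, mul_comm]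

lemma toDual_self_eq_zero_iff [AddCommMonoid M] [Module ℝ M] (b : Basis ι ℝ M) {x : M} :
    b.toDual x x = 0 ↔ x = 0 := by
  rw [b.toDual_apply_eq_dotProduct, dotProduct_self_eq_zero, LinearEquiv.map_eq_zero_iff]

end Module.Basis

section TStarExtension

variable {L : Type*} [LieRing L] [LieAlgebra ℝ L]

@[simp]
lemma tstar_lie_mk (u v : L) (α β : Dual ℝ L) :
    ⁅((u, α) : L × Dual ℝ L), (v, β)⁆ = (⁅u, v⁆, ⁅u, β⁆ - ⁅v, α⁆) := rfl

def tstarFst : (L × Dual ℝ L) →ₗ⁅ℝ⁆ L :=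
  { LinearMap.fst ℝ L (Dual ℝ L) with map_lie' := rfl }

lemma IsTwoCocycle.apply_swap {M : Type*} [LieRing M] [LieAlgebra ℝ M]
    {θ : M →ₗ[ℝ] M →ₗ[ℝ] ℝ} (hθ : IsTwoCocycle θ) (x y : M) : θ y x = -θ x y := by
  have h := hθ.1 (x + y)
  simp only [map_add, LinearMap.add_apply, hθ.1 x, hθ.1 y, zero_add, add_zero] at h
  exact eq_neg_of_add_eq_zero_left h

variable {θ : (L × Dual ℝ L) →ₗ[ℝ] (L × Dual ℝ L) →ₗ[ℝ] ℝ}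

lemma IsTwoCocycle.tstar_inr_lie_inr (hθ : IsTwoCocycle θ) (u : L) (α β : Dual ℝ L) :
    θ (0, ⁅u, α⁆) (0, β) = -θ (0, α) (0, ⁅u, β⁆) := by
  have h := hθ.2 (u, 0) (0, α) (0, β)
  have hneg : ((0 : L), -⁅u, β⁆) = -(0, ⁅u, β⁆) := by simp
  simp only [tstar_lie_mk, lie_zero, zero_lie, sub_zero, zero_sub, Prod.mk_zero_zero, map_zero,
    LinearMap.zero_apply, add_zero, hneg, map_neg, LinearMap.neg_apply] at h
  linear_combination h + hθ.apply_swap (0, α) (0, ⁅u, β⁆)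

lemma IsTwoCocycle.tstar_lie_inl_inr (hθ : IsTwoCocycle θ) (u v : L) (α : Dual ℝ L) :
    θ (⁅u, v⁆, 0) (0, α) = θ (u, 0) (0, ⁅v, α⁆) - θ (v, 0) (0, ⁅u, α⁆) := by
  have h := hθ.2 (u, 0) (v, 0) (0, α)
  have hneg : ((0 : L), -⁅u, α⁆) = -(0, ⁅u, α⁆) := by simp
  simp only [tstar_lie_mk, lie_zero, zero_lie, sub_zero, zero_sub, hneg, map_neg,
    LinearMap.neg_apply] at h
  linear_combination h - hθ.apply_swap (u, 0) (0, ⁅v, α⁆) + hθ.apply_swap (v, 0) (0, ⁅u, α⁆)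

noncomputable def tstarMixedForm {ι : Type*} [DecidableEq ι] (b : Basis ι ℝ L)
    (θ : (L × Dual ℝ L) →ₗ[ℝ] (L × Dual ℝ L) →ₗ[ℝ] ℝ) : L →ₗ[ℝ] L →ₗ[ℝ] ℝ :=
  θ.compl₁₂ (LinearMap.inl ℝ L (Dual ℝ L)) (LinearMap.inr ℝ L (Dual ℝ L) ∘ₗ b.toDual)

@[simp]
lemma tstarMixedForm_apply {ι : Type*} [DecidableEq ι] (b : Basis ι ℝ L) (u v : L) :
    tstarMixedForm b θ u v = θ (u, 0) (0, b.toDual v) := rfl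

end TStarExtension

structure IsSu2Basis {L : Type*} [LieRing L] [LieAlgebra ℝ L] (b : Basis (Fin 3) ℝ L) : Prop where
  lie_zero_one : ⁅b 0, b 1⁆ = b 2
  lie_one_two : ⁅b 1, b 2⁆ = b 0
  lie_two_zero : ⁅b 2, b 0⁆ = b 1

namespace IsSu2Basis

variable {L : Type*} [LieRing L] [LieAlgebra ℝ L] {b : Basis (Fin 3) ℝ L}

lemma lie_one_zero (hb : IsSu2Basis b) : ⁅b 1, b 0⁆ = -b 2 := by rw [← lie_skew, hb.lie_zero_one]

lemma lie_two_one (hb : IsSu2Basis b) : ⁅b 2, b 1⁆ = -b 0 := by rw [← lie_skew, hb.lie_one_two]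

lemma lie_zero_two (hb : IsSu2Basis b) : ⁅b 0, b 2⁆ = -b 1 := by rw [← lie_skew, hb.lie_two_zero]

lemma equivFun_lie (hb : IsSu2Basis b) (x y : L) :
    b.equivFun ⁅x, y⁆ = b.equivFun x ⨯₃ b.equivFun y := by
  conv_lhs => rw [← b.sum_equivFun x, ← b.sum_equivFun y]
  simp only [Fin.sum_univ_three, lie_add, add_lie, lie_smul, smul_lie, lie_self, hb.lie_zero_one,
    hb.lie_one_two, hb.lie_two_zero, hb.lie_one_zero, hb.lie_two_one, hb.lie_zero_two, smul_zero,
    smul_neg, map_add, map_neg, map_smul, map_zero]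
  ext i
  fin_cases i <;> simp [cross_apply] <;> ring

lemma toDual_lie (hb : IsSu2Basis b) (x y : L) : b.toDual ⁅x, y⁆ = ⁅x, b.toDual y⁆ := by
  ext z
  rw [Dual.lie_apply, b.toDual_apply_eq_dotProduct, b.toDual_apply_eq_dotProduct, hb.equivFun_lie,
    hb.equivFun_lie, dotProduct_comm, triple_product_permutation,
    triple_product_permutation (b.equivFun y), ← cross_anticomm, dotProduct_neg]

lemma toDual_lie_self_left (hb : IsSu2Basis b) (x y : L) : b.toDual ⁅x, y⁆ x = 0 := by
  rw [b.toDual_apply_eq_dotProduct, hb.equivFun_lie, dotProduct_comm, dot_self_cross]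

lemma toDual_lie_self_right (hb : IsSu2Basis b) (x y : L) : b.toDual ⁅x, y⁆ y = 0 := by
  rw [b.toDual_apply_eq_dotProduct, hb.equivFun_lie, dotProduct_comm, dot_cross_self]

lemma lie_lie_self (hb : IsSu2Basis b) (x y : L) :
    ⁅x, ⁅y, x⁆⁆ = b.toDual x x • y - b.toDual x y • x := by
  apply b.equivFun.injective
  rw [hb.equivFun_lie, hb.equivFun_lie, cross_cross_eq_smul_sub_smul', map_sub, map_smul, map_smul,
    b.toDual_apply_eq_dotProduct, b.toDual_apply_eq_dotProduct, dotProduct_comm (b.equivFun y)]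

lemma submodule_dual_eq_top (hb : IsSu2Basis b) (W : Submodule ℝ (Dual ℝ L))
    (hW : ∀ (x : L), ∀ α ∈ W, ⁅x, α⁆ ∈ W) (hne : W ≠ ⊥) : W = ⊤ := by
  obtain ⟨_, hvW, hv0⟩ := W.ne_bot_iff.mp hne
  obtain ⟨v, rfl⟩ := b.toDualEquiv.surjective ‹_›
  rw [b.toDualEquiv_apply] at hvW hv0
  have hvv : b.toDual v v ≠ 0 := by
    rwa [Ne, b.toDual_self_eq_zero_iff, ← map_eq_zero_iff _ b.toDual_injective]
  refine W.eq_top_iff'.mpr fun β => ?_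
  obtain ⟨y, rfl⟩ := b.toDualEquiv.surjective β
  rw [b.toDualEquiv_apply]
  -- `κ ⁅v, ⁅y, v⁆⁆ = |v|² κ y - ⟨v, y⟩ κ v` lies in `W`, and so does `κ v`.
  have h : b.toDual ⁅v, ⁅y, v⁆⁆ ∈ W := by
    rw [hb.toDual_lie, hb.toDual_lie]
    exact hW _ _ (hW _ _ hvW)
  rw [hb.lie_lie_self, map_sub, map_smul, map_smul] at h
  refine (W.smul_mem_iff hvv).mp ?_
  simpa using W.add_mem h (W.smul_mem (b.toDual v y) hvW)

lemma finrank_lieSubalgebra_ne_two (hb : IsSu2Basis b) (P : LieSubalgebra ℝ L) :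
    finrank ℝ P ≠ 2 := by
  intro h2
  have := Module.Finite.of_basis b
  let B := finBasisOfFinrankEq ℝ P h2
  set x : L := ↑(B 0)
  set y : L := ↑(B 1)
  obtain ⟨a, c, hxy⟩ : ∃ a c : ℝ, ⁅x, y⁆ = a • x + c • y := by
    have h := B.sum_repr ⟨⁅x, y⁆, P.lie_mem (B 0).2 (B 1).2⟩
    rw [Fin.sum_univ_two] at h
    exact ⟨_, _, (congrArg Subtype.val h).symm⟩
  have hxy0 : ⁅x, y⁆ = 0 := by
    rw [← b.toDual_self_eq_zero_iff]
    nth_rewrite 2 [hxy]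
    rw [map_add, map_smul, map_smul, hb.toDual_lie_self_left, hb.toDual_lie_self_right, smul_zero,
      smul_zero, add_zero]
  have hdep : (-b.toDual x y) • B 0 + b.toDual x x • B 1 = 0 := by
    apply Subtype.ext
    push_cast
    rw [neg_smul, neg_add_eq_sub, ← hb.lie_lie_self, ← lie_skew y x, hxy0, neg_zero, lie_zero]
  have hx0 : b.toDual x x = 0 := by
    simpa using Fintype.linearIndependent_iff.mp B.linearIndependent
      ![-b.toDual x y, b.toDual x x] (by rw [Fin.sum_univ_two]; exact hdep) 1
  exact B.ne_zero 0 (Subtype.ext (b.toDual_self_eq_zero_iff.mp hx0))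

lemma inr_mem_and_exists_fst_ne_zero (hb : IsSu2Basis b)
    (H : LieSubalgebra ℝ (L × Dual ℝ L)) (h4 : 4 ≤ finrank ℝ H) (h6 : finrank ℝ H < 6) :
    (∀ α : Dual ℝ L, ((0 : L), α) ∈ H) ∧ ∃ x ∈ H, x.1 ≠ 0 := by
  have := Module.Finite.of_basis b
  have hL : finrank ℝ L = 3 := by rw [finrank_eq_card_basis b, Fintype.card_fin]
  have hD : finrank ℝ (Dual ℝ L) = 3 := by rw [Subspace.dual_finrank_eq, hL]
  set P := H.map tstarFst
  set W := H.toSubmodule.comap (LinearMap.inr ℝ L (Dual ℝ L))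
  have hsum : finrank ℝ P + finrank ℝ W = finrank ℝ H :=
    H.toSubmodule.finrank_map_fst_add_finrank_comap_inr
  have hP3 : finrank ℝ P ≤ 3 := hL ▸ Submodule.finrank_le P.toSubmodule
  have hW3 : finrank ℝ W ≤ 3 := hD ▸ Submodule.finrank_le W
  have hP2 := hb.finrank_lieSubalgebra_ne_two P
  have hP_ne_three : finrank ℝ P ≠ 3 := by
    intro hP
    have hPtop : P.toSubmodule = ⊤ := Submodule.eq_top_of_finrank_eq (hP.trans hL.symm)
    have hWinv : ∀ (x : L), ∀ α ∈ W, ⁅x, α⁆ ∈ W := by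
      intro x α hα
      obtain ⟨⟨x, β⟩, hxβ, rfl⟩ := (LieSubalgebra.mem_map _ _ _).mp
        (show x ∈ P.toSubmodule by rw [hPtop]; trivial)
      show ((0 : L), ⁅x, α⁆) ∈ H
      simpa using H.lie_mem hxβ hα
    have hWtop := hb.submodule_dual_eq_top W hWinv fun hW => by
      rw [hW, finrank_bot] at hsum
      omega
    rw [hWtop, finrank_top, hD] at hsum
    omega
  have hWtop : W = ⊤ := Submodule.eq_top_of_finrank_eq (by omega)
  refine ⟨fun α => show α ∈ W by rw [hWtop]; trivial, ?_⟩
  obtain ⟨_, ⟨x, hx, rfl⟩, hx0⟩ := P.toSubmodule.ne_bot_iff.mp fun hP => by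
    have hP0 : finrank ℝ P = 0 := by
      change finrank ℝ P.toSubmodule = 0
      rw [hP, finrank_bot]
    omega
  exact ⟨x, hx, hx0⟩

variable {θ : (L × Dual ℝ L) →ₗ[ℝ] (L × Dual ℝ L) →ₗ[ℝ] ℝ}

lemma cocycle_inr_inr (hb : IsSu2Basis b) (hθ : IsTwoCocycle θ) (α β : Dual ℝ L) :
    θ (0, α) (0, β) = 0 := by
  let κ := LinearMap.inr ℝ L (Dual ℝ L) ∘ₗ b.toDual
  have hlie := LinearMap.apply_lie_eq_zero_of_invariant (θ.compl₁₂ κ κ)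
    (fun x y => hθ.apply_swap _ _)
    (fun x y z => by simp [κ, hb.toDual_lie, hθ.tstar_inr_lie_inr])
  have hzero : θ.compl₁₂ κ κ = 0 := b.ext fun i => LinearMap.ext fun z => by
    fin_cases i
    · simpa [hb.lie_one_two] using hlie (b 1) (b 2) z
    · simpa [hb.lie_two_zero] using hlie (b 2) (b 0) z
    · simpa [hb.lie_zero_one] using hlie (b 0) (b 1) z
  obtain ⟨v, rfl⟩ := b.toDualEquiv.surjective α
  obtain ⟨w, rfl⟩ := b.toDualEquiv.surjective β
  simpa [κ] using LinearMap.congr_fun₂ hzero v w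

lemma tstarMixedForm_antisymm (hb : IsSu2Basis b) (hθ : IsTwoCocycle θ) (u v : L) :
    tstarMixedForm b θ v u = -tstarMixedForm b θ u v := by
  set B := tstarMixedForm b θ
  have hlie : ∀ x y z, B ⁅x, y⁆ z = B x ⁅y, z⁆ - B y ⁅x, z⁆ := fun x y z => by
    simp only [B, tstarMixedForm_apply, hb.toDual_lie, hθ.tstar_lie_inl_inr]
  -- On cyclic basis triples: `B₂₂ = B₀₀ + B₁₁` (so the diagonal vanishes) and `B₂₀ = -B₀₂`.
  have r012 := hlie (b 0) (b 1) (b 2)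
  have r120 := hlie (b 1) (b 2) (b 0)
  have r201 := hlie (b 2) (b 0) (b 1)
  have r010 := hlie (b 0) (b 1) (b 0)
  have r121 := hlie (b 1) (b 2) (b 1)
  have r202 := hlie (b 2) (b 0) (b 2)
  simp only [hb.lie_zero_one, hb.lie_one_two, hb.lie_two_zero, hb.lie_one_zero, hb.lie_two_one,
    hb.lie_zero_two, lie_self, map_neg, map_zero, sub_zero] at r012 r120 r201 r010 r121 r202
  suffices h : B + B.flip = 0 by
    simpa [add_eq_zero_iff_eq_neg] using LinearMap.congr_fun₂ h v u
  refine b.ext fun i => b.ext fun j => ?_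
  simp only [LinearMap.add_apply, LinearMap.flip_apply, LinearMap.zero_apply]
  fin_cases i <;> fin_cases j <;>
    simp only [Fin.zero_eta, Fin.mk_one, Fin.reduceFinMk, Fin.isValue] <;> linarith

lemma cocycle_inr_toDual_eq_zero (hb : IsSu2Basis b) (hθ : IsTwoCocycle θ) {u : L}
    (hu : ∀ α, θ (u, 0) (0, α) = 0) (y : L × Dual ℝ L) : θ (0, b.toDual u) y = 0 := by
  have hy : y = (y.1, 0) + (0, y.2) := by simp
  have h := hb.tstarMixedForm_antisymm hθ u y.1
  rw [tstarMixedForm_apply, tstarMixedForm_apply] at h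
  rw [hy, map_add, hb.cocycle_inr_inr hθ, add_zero, hθ.apply_swap, h, hu, neg_zero, neg_zero]

lemma exists_ne_zero_cocycle_inl_inr_eq_zero (hb : IsSu2Basis b) (hθ : IsTwoCocycle θ) :
    ∃ u ≠ 0, ∀ α, θ (u, 0) (0, α) = 0 := by
  have := Module.Finite.of_basis b
  have hodd : Odd (finrank ℝ L) := by rw [finrank_eq_card_basis b, Fintype.card_fin]; decide
  have h := LinearMap.BilinForm.not_separatingLeft_of_antisymm hodd (tstarMixedForm b θ)
    (hb.tstarMixedForm_antisymm hθ)
  simp only [LinearMap.SeparatingLeft, not_forall] at h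
  obtain ⟨u, hu, hu0⟩ := h
  refine ⟨u, hu0, fun α => ?_⟩
  obtain ⟨v, rfl⟩ := b.toDualEquiv.surjective α
  simpa using hu v

end IsSu2Basis

/-- The `T*`-extension `T*su(2)` of `su(2)` (the 3-dimensional real Lie algebra with
basis `e₁, e₂, e₃` and brackets `[e₁,e₂] = e₃`, `[e₂,e₃] = e₁`, `[e₃,e₁] = e₂`) admits no
`k`-symplectic structure for any `k ≥ 1`. -/
theorem tstar_su2_no_ksymplectic
    {L : Type*} [LieRing L] [LieAlgebra ℝ L]
    (b : Module.Basis (Fin 3) ℝ L)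
    (h12 : ⁅b 0, b 1⁆ = b 2) (h23 : ⁅b 1, b 2⁆ = b 0) (h31 : ⁅b 2, b 0⁆ = b 1) :
    ∀ (n k : ℕ), 1 ≤ k →
      ∀ (H : LieSubalgebra ℝ (L × Module.Dual ℝ L))
        (θ : Fin k → ((L × Module.Dual ℝ L) →ₗ[ℝ] (L × Module.Dual ℝ L) →ₗ[ℝ] ℝ)),
        ¬ IsKSymplectic n k H θ := by
  rintro n k hk H θ ⟨hdim, hHdim, hθ, hrad, hiso⟩
  have hb : IsSu2Basis b := ⟨h12, h23, h31⟩
  have := Module.Finite.of_basis b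
  have hdim6 : n * k + n = 6 := by
    rw [← Nat.mul_succ, ← hdim, finrank_prod, Subspace.dual_finrank_eq, finrank_eq_card_basis b,
      Fintype.card_fin]
  obtain ⟨u, hu0, hu⟩ : ∃ u ≠ 0, ∀ i α, θ i (u, 0) (0, α) = 0 := by
    rcases Nat.lt_or_ge k 2 with hk1 | hk2
    · obtain rfl : k = 1 := by omega
      obtain ⟨u, hu0, hu⟩ := hb.exists_ne_zero_cocycle_inl_inr_eq_zero (hθ 0)
      exact ⟨u, hu0, fun i => Subsingleton.elim i 0 ▸ hu⟩
    · have : n * 2 ≤ n * k := Nat.mul_le_mul_left n hk2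
      have : n ≠ 0 := by rintro rfl; simp at hdim6
      obtain ⟨hdual, x, hxH, hx0⟩ :=
        hb.inr_mem_and_exists_fst_ne_zero H (by rw [hHdim]; omega) (by rw [hHdim]; omega)
      refine ⟨x.1, hx0, fun i α => ?_⟩
      have hx : x = (x.1, 0) + (0, x.2) := by simp
      have := hiso i x hxH _ (hdual α)
      rwa [hx, map_add, LinearMap.add_apply, hb.cocycle_inr_inr (hθ i), add_zero] at this
  have hκu : b.toDual u = 0 :=
    congrArg Prod.snd (hrad _ fun i => hb.cocycle_inr_toDual_eq_zero (hθ i) (hu i))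
  exact hu0 (b.toDual_inj u hκu)
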